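/- For s ∈ (0,1) and z > 0, ∫₀^∞ (1 - e^{-z²/(4t)}) / t^{1-s} dt = (Γ(1-s)/s) · (z²/4)^s. -/

import Mathlib

/-!
Substituting `u = z²/(4t)` turns the integral into `(z²/4)^s ∫₀^∞ (1 - e^{-u}) u^{-s-1} du`.
Integrating by parts against `d(-u^{-s}/s)` turns the latter into `s⁻¹ ∫₀^∞ e^{-u} u^{-s} du
= Γ(1-s)/s`; the boundary terms vanish because `1 - e^{-u}` is `O(u)` at `0` and bounded at `∞`.
-/

open Real MeasureTheory Set Filter Asymptotics Topology

theorem integral_comp_inv_mul_rpow (f : ℝ → ℝ) (a : ℝ) :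
    ∫ t in Ioi 0, f t⁻¹ * t ^ (a - 1) = ∫ u in Ioi 0, f u * u ^ (-a - 1) := by
  rw [← integral_comp_rpow_Ioi (fun u => f u * u ^ (-a - 1)) (p := -1) (by norm_num)]
  refine setIntegral_congr_fun measurableSet_Ioi fun t (ht : 0 < t) => ?_
  simp only [smul_eq_mul, rpow_neg_one, abs_neg, abs_one, one_mul, inv_rpow ht.le,
    ← rpow_neg ht.le]
  rw [mul_left_comm, ← rpow_add ht]
  ring_nf

theorem integral_comp_mul_left_mul_rpow (f : ℝ → ℝ) (a : ℝ) {c : ℝ} (hc : 0 < c) :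
    ∫ t in Ioi 0, f (c * t) * t ^ (a - 1) = c ^ (-a) * ∫ u in Ioi 0, f u * u ^ (a - 1) := by
  have h := integral_comp_mul_left_Ioi (fun u => f u * u ^ (a - 1)) 0 hc
  rw [mul_zero, smul_eq_mul] at h
  have hscale : ∀ t ∈ Ioi (0 : ℝ),
      f (c * t) * (c * t) ^ (a - 1) = c ^ (a - 1) * (f (c * t) * t ^ (a - 1)) :=
    fun t (ht : 0 < t) => by rw [mul_rpow hc.le ht.le]; ring
  rw [setIntegral_congr_fun measurableSet_Ioi hscale, integral_const_mul] at h
  calc ∫ t in Ioi 0, f (c * t) * t ^ (a - 1)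
      = c ^ (-(a - 1)) * (c ^ (a - 1) * ∫ t in Ioi 0, f (c * t) * t ^ (a - 1)) := by
        rw [← mul_assoc, ← rpow_add hc, neg_add_cancel, rpow_zero, one_mul]
    _ = c ^ (-a) * ∫ u in Ioi 0, f u * u ^ (a - 1) := by
        rw [h, ← mul_assoc, ← rpow_neg_one, ← rpow_add hc]
        ring_nf

theorem integral_comp_div_mul_rpow (f : ℝ → ℝ) (a : ℝ) {c : ℝ} (hc : 0 < c) :
    ∫ t in Ioi 0, f (c / t) * t ^ (a - 1) = c ^ a * ∫ u in Ioi 0, f u * u ^ (-a - 1) := by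
  simp_rw [div_eq_mul_inv]
  rw [integral_comp_inv_mul_rpow (fun u => f (c * u)), integral_comp_mul_left_mul_rpow f _ hc,
    neg_neg]

lemma one_sub_exp_neg_nonneg {x : ℝ} (hx : 0 ≤ x) : 0 ≤ 1 - exp (-x) := by
  linarith [exp_le_one_iff.mpr (neg_nonpos.mpr hx)]

lemma isBigO_one_sub_exp_neg_atTop : (fun x : ℝ => 1 - exp (-x)) =O[atTop] (fun _ => (1 : ℝ)) :=
  IsBigO.of_bound 1 <| by
    filter_upwards [eventually_ge_atTop 0] with x hx
    rw [norm_of_nonneg (one_sub_exp_neg_nonneg hx), norm_one, one_mul]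
    linarith [exp_pos (-x)]

lemma isBigO_one_sub_exp_neg_nhdsGT_zero :
    (fun x : ℝ => 1 - exp (-x)) =O[𝓝[>] 0] (fun x => x) :=
  IsBigO.of_bound 1 <| by
    filter_upwards [self_mem_nhdsWithin] with x (hx : 0 < x)
    rw [norm_of_nonneg (one_sub_exp_neg_nonneg hx.le), norm_of_nonneg hx.le, one_mul]
    linarith [one_sub_le_exp_neg x]

lemma integrableOn_one_sub_exp_neg_mul_rpow {s : ℝ} (hs0 : 0 < s) (hs1 : s < 1) :
    IntegrableOn (fun x : ℝ => (1 - exp (-x)) * x ^ (-s - 1)) (Ioi 0) := by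
  have := mellin_convergent_of_isBigO_scalar (a := 0) (b := -1) (s := -s)
    ((by fun_prop : Continuous fun x : ℝ => 1 - exp (-x)).locallyIntegrable.locallyIntegrableOn _)
    (by simpa using isBigO_one_sub_exp_neg_atTop) (by linarith)
    (by simpa using isBigO_one_sub_exp_neg_nhdsGT_zero) (by linarith)
  simpa only [mul_comm] using this

theorem integral_one_sub_exp_neg_mul_rpow {s : ℝ} (hs0 : 0 < s) (hs1 : s < 1) :
    ∫ x in Ioi 0, (1 - exp (-x)) * x ^ (-s - 1) = Gamma (1 - s) / s := by
  have hu : ∀ x ∈ Ioi (0 : ℝ), HasDerivAt (fun x => 1 - exp (-x)) (exp (-x)) x := fun x _ => by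
    simpa using ((hasDerivAt_neg x).exp).const_sub 1
  have hv : ∀ x ∈ Ioi (0 : ℝ), HasDerivAt (fun x => -s⁻¹ * x ^ (-s)) (x ^ (-s - 1)) x :=
    fun x hx => ((hasDerivAt_rpow_const (Or.inl (ne_of_gt hx))).const_mul (-s⁻¹)).congr_deriv
      (by field_simp)
  have hGamma : IntegrableOn (fun x => exp (-x) * x ^ (-s)) (Ioi 0) ∧
      ∫ x in Ioi 0, exp (-x) * x ^ (-s) = Gamma (1 - s) := by
    simpa only [sub_sub_cancel_left] using
      And.intro (GammaIntegral_convergent (s := 1 - s) (by linarith))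
        (Gamma_eq_integral (s := 1 - s) (by linarith)).symm
  have hu'v : IntegrableOn (fun x => exp (-x) * (-s⁻¹ * x ^ (-s))) (Ioi 0) :=
    IntegrableOn.congr_fun (hGamma.1.const_mul (-s⁻¹)) (fun x _ => by ring) measurableSet_Ioi
  have h_zero : Tendsto (fun x => (1 - exp (-x)) * (-s⁻¹ * x ^ (-s))) (𝓝[>] 0) (𝓝 0) := by
    have h : Tendsto (fun x : ℝ => -s⁻¹ * x ^ (1 + -s)) (𝓝[>] 0) (𝓝 0) := by
      simpa [zero_rpow (by linarith : 1 + -s ≠ 0)] using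
        ((continuousAt_rpow_const 0 (1 + -s) (Or.inr (by linarith))).tendsto.mono_left
          nhdsWithin_le_nhds).const_mul (-s⁻¹)
    refine (isBigO_one_sub_exp_neg_nhdsGT_zero.mul (isBigO_refl _ _)).trans_tendsto (h.congr' ?_)
    filter_upwards [self_mem_nhdsWithin] with x (hx : 0 < x)
    rw [rpow_one_add' hx.le (by linarith)]
    ring
  have h_infty : Tendsto (fun x => (1 - exp (-x)) * (-s⁻¹ * x ^ (-s))) atTop (𝓝 0) :=
    (isBigO_one_sub_exp_neg_atTop.mul (isBigO_refl _ _)).trans_tendsto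
      (by simpa using (tendsto_rpow_neg_atTop hs0).const_mul (-s⁻¹))
  rw [integral_Ioi_mul_deriv_eq_deriv_mul hu hv
    (integrableOn_one_sub_exp_neg_mul_rpow hs0 hs1) hu'v h_zero h_infty]
  simp_rw [mul_left_comm (rexp _), integral_const_mul, hGamma.2]
  ring

/-- For `s ∈ (0,1)` and `z > 0`,
`∫₀^∞ (1 - e^{-z²/(4t)}) / t^(1-s) dt = (Γ(1-s)/s) · (z²/4)^s`. -/
theorem integral_one_sub_exp_div_rpow (s z : ℝ) (hs0 : 0 < s) (hs1 : s < 1) (hz : 0 < z) :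
    ∫ t in Set.Ioi (0 : ℝ), (1 - Real.exp (-(z ^ 2 / (4 * t)))) / t ^ (1 - s)
      = (Real.Gamma (1 - s) / s) * (z ^ 2 / 4) ^ s := by
  have hc : 0 < z ^ 2 / 4 := by positivity
  calc ∫ t in Ioi (0 : ℝ), (1 - exp (-(z ^ 2 / (4 * t)))) / t ^ (1 - s)
      = ∫ t in Ioi (0 : ℝ), (1 - exp (-(z ^ 2 / 4 / t))) * t ^ (s - 1) :=
        setIntegral_congr_fun measurableSet_Ioi fun t (ht : 0 < t) => by
          rw [div_div, div_eq_mul_inv, ← rpow_neg ht.le, neg_sub]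
    _ = (z ^ 2 / 4) ^ s * (Gamma (1 - s) / s) := by
        rw [integral_comp_div_mul_rpow (fun u => 1 - exp (-u)) s hc,
          integral_one_sub_exp_neg_mul_rpow hs0 hs1]
    _ = Gamma (1 - s) / s * (z ^ 2 / 4) ^ s := mul_comm _ _
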